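/- arXiv:2509.16940 — 3 statements merged into one kernel-verified Lean document; each statement's English description precedes it below -/
import Mathlib

section
/- Let B, α, γ be positive real numbers and let u ∈ (0, 1). Then the 4×4 symmetric matrix H(u) with rows (B/u + B/(1−u) + 1/γ², −1, 0, 0), (−1, α + γ², 0, 0), (0, 0, 1, 0), (0, 0, 0, 1) is positive definite. -/
/-! The quadratic form of `H(u)` is
`(B/u + B/(1-u)) x₀² + α x₁² + x₂² + x₃² + (x₀/γ - γ x₁)²`,
i.e. `H(u)` is a positive diagonal matrix plus the rank-one positive semidefinite matrix
`v vᵀ` with `v = (1/γ, -γ, 0, 0)`. -/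

open Matrix

theorem Matrix.PosDef.diagonal_add_vecMulVec_self_star {R n : Type*} [CommRing R]
    [PartialOrder R] [StarRing R] [StarOrderedRing R] [NoZeroDivisors R]
    [Fintype n] [DecidableEq n] {d : n → R} (hd : ∀ i, 0 < d i) (v : n → R) :
    (diagonal d + vecMulVec v (star v)).PosDef :=
  (PosDef.diagonal hd).add_posSemidef (posSemidef_vecMulVec_self_star v)

/-- For `B, α, γ > 0` and `u ∈ (0,1)`, the Hessian of the integrand of the
convex part of the Keller–Segel free energy,
`H(u) = [[B/u + B/(1−u) + 1/γ², −1, 0, 0], [−1, α + γ², 0, 0], [0,0,1,0], [0,0,0,1]]`,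
is positive definite. -/
theorem stmt_2 (B α γ u : ℝ) (hB : 0 < B) (hα : 0 < α) (hγ : 0 < γ)
    (hu0 : 0 < u) (hu1 : u < 1) :
    (!![B / u + B / (1 - u) + 1 / γ ^ 2, -1, 0, 0;
        -1, α + γ ^ 2, 0, 0;
        0, 0, 1, 0;
        0, 0, 0, 1] : Matrix (Fin 4) (Fin 4) ℝ).PosDef := by
  set v : Fin 4 → ℝ := ![γ⁻¹, -γ, 0, 0]
  have hsplit : (!![B / u + B / (1 - u) + 1 / γ ^ 2, -1, 0, 0;
      -1, α + γ ^ 2, 0, 0;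
      0, 0, 1, 0;
      0, 0, 0, 1] : Matrix (Fin 4) (Fin 4) ℝ) =
      diagonal ![B / u + B / (1 - u), α, 1, 1] + vecMulVec v (star v) := by
    ext i j
    fin_cases i <;> fin_cases j <;> simp [v, hγ.ne', sq]
  have hdiag : ∀ i, 0 < ![B / u + B / (1 - u), α, 1, 1] i := by
    have : 0 < B / u + B / (1 - u) := by
      have : 0 < 1 - u := sub_pos.2 hu1
      positivity
    intro i
    fin_cases i <;> simp [this, hα]
  rw [hsplit]
  exact PosDef.diagonal_add_vecMulVec_self_star hdiag v
end

section
/- Let n ≥ 1, let w₁, …, wₙ be positive real numbers, let a₀ ∈ (0, 1), let M be a symmetric positive semidefinite real n×n matrix, let b ∈ ℝⁿ, and let B > 0. Let F̄ : [0, 1] → ℝ be the continuous extension of F(s) = s·log s + (1−s)·log(1−s), with F̄(0) = F̄(1) = 0. Define G(x) = (1/2)·xᵀMx + bᵀx + B·Σᵢ F̄(xᵢ) on the compact convex set A = {x ∈ ℝⁿ : 0 ≤ xᵢ ≤ 1 for all i, and Σᵢ wᵢ·xᵢ = a₀·Σᵢ wᵢ}. Then G attains a minimum on A at a unique point x*,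 and this minimizer satisfies 0 < x*ᵢ < 1 for every i. -/
/-!
The energy is a convex quadratic plus `B` times the strictly convex entropy `∑ F̄(xᵢ)`, so it is
strictly convex on the compact convex set `A` and has exactly one minimizer there. The minimizer
avoids the faces `xᵢ = 0`: moving mass `t` into node `i` from a node `j` with `xⱼ > 0` changes the
energy by at most `C·t + (B/wᵢ)·t·log t`, which is negative for small `t` because `F̄` has slope
`-∞` at `0`. The faces `xᵢ = 1` follow by the symmetry `x ↦ 1 - x` of `F̄` and of the constraint.
-/

open Matrix

/-- The continuous extension `F̄` of the entropy density `F(s) = s·log s + (1−s)·log(1−s)`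
to `[0, 1]`; since `Real.log 0 = 0` in Lean, this formula already satisfies
`F̄(0) = F̄(1) = 0` and agrees with `F` on `(0, 1)`. -/
noncomputable def Fbar (s : ℝ) : ℝ := s * Real.log s + (1 - s) * Real.log (1 - s)

open Set Filter Topology Real

lemma Fbar_eq_neg_binEntropy : Fbar = -binEntropy := by
  ext s; simp only [Fbar, Pi.neg_apply, binEntropy, log_inv]; ring

lemma continuous_Fbar : Continuous Fbar :=
  Fbar_eq_neg_binEntropy ▸ binEntropy_continuous.neg

lemma strictConvexOn_Fbar : StrictConvexOn ℝ (Icc 0 1) Fbar :=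
  Fbar_eq_neg_binEntropy ▸ strictConcave_binEntropy.neg

@[simp] lemma Fbar_zero : Fbar 0 = 0 := by simp [Fbar]

lemma Fbar_one_sub (s : ℝ) : Fbar (1 - s) = Fbar s := by
  simp only [Fbar_eq_neg_binEntropy, Pi.neg_apply, binEntropy_one_sub]

lemma neg_log_two_le_Fbar (s : ℝ) : -log 2 ≤ Fbar s := by
  rw [Fbar_eq_neg_binEntropy, Pi.neg_apply, neg_le_neg_iff]; exact binEntropy_le_log_two

lemma Fbar_le_mul_log {s : ℝ} (h0 : 0 ≤ s) (h1 : s ≤ 1) : Fbar s ≤ s * log s := by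
  have : (1 - s) * log (1 - s) ≤ 0 :=
    mul_nonpos_of_nonneg_of_nonpos (by linarith) (log_nonpos (by linarith) (by linarith))
  unfold Fbar; linarith

lemma Fbar_sub_le {x s : ℝ} (hx : 0 < x) (hx1 : x ≤ 1) (hs : 0 ≤ s) (hsx : s ≤ x) :
    Fbar (x - s) ≤ Fbar x + s / x * log 2 := by
  set θ := s / x
  have hθ0 : 0 ≤ θ := div_nonneg hs hx.le
  have hθ1 : θ ≤ 1 := div_le_one_of_le₀ hsx hx.le
  have hconv := strictConvexOn_Fbar.convexOn.2 ⟨hx.le, hx1⟩ (left_mem_Icc.2 zero_le_one)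
    (sub_nonneg.2 hθ1) hθ0 (sub_add_cancel 1 θ)
  have hxs : (1 - θ) • x + θ • (0 : ℝ) = x - s := by
    simp only [smul_eq_mul, mul_zero, add_zero, θ]; field_simp
  rw [hxs, smul_eq_mul, smul_eq_mul, Fbar_zero, mul_zero, add_zero] at hconv
  nlinarith [neg_log_two_le_Fbar x]

lemma StrictConvexOn.const_mul {E : Type*} [AddCommMonoid E] [SMul ℝ E] {s : Set E} {f : E → ℝ}
    (hf : StrictConvexOn ℝ s f) {c : ℝ} (hc : 0 < c) : StrictConvexOn ℝ s fun x => c * f x :=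
  ⟨hf.1, fun _ hx _ hy hxy _ _ ha hb hab => by
    have := mul_lt_mul_of_pos_left (hf.2 hx hy hxy ha hb hab) hc
    simp only [smul_eq_mul] at this ⊢
    linarith⟩

lemma ConvexOn.le_add_smul_mul_sub {E : Type*} [AddCommGroup E] [Module ℝ E] {f : E → ℝ}
    (hf : ConvexOn ℝ univ f) (x d : E) {t : ℝ} (ht0 : 0 ≤ t) (ht1 : t ≤ 1) :
    f (x + t • d) ≤ f x + t * (f (x + d) - f x) := by
  have h := hf.2 (mem_univ x) (mem_univ (x + d)) (sub_nonneg.2 ht1) ht0 (sub_add_cancel 1 t)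
  rw [smul_add, ← add_assoc, ← add_smul, sub_add_cancel, one_smul, smul_eq_mul, smul_eq_mul] at h
  linarith

variable {ι : Type*}

section

variable [DecidableEq ι] {w : ι → ℝ} {i j : ι}

noncomputable def massTransfer (w : ι → ℝ) (i j : ι) : ι → ℝ :=
  Pi.single i (w i)⁻¹ - Pi.single j (w j)⁻¹

lemma add_smul_massTransfer_apply_left (hij : i ≠ j) (x : ι → ℝ) (t : ℝ) :
    (x + t • massTransfer w i j) i = x i + t / w i := by
  simp [massTransfer, hij, div_eq_mul_inv]

lemma add_smul_massTransfer_apply_right (hij : i ≠ j) (x : ι → ℝ) (t : ℝ) :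
    (x + t • massTransfer w i j) j = x j - t / w j := by
  simp [massTransfer, hij.symm, div_eq_mul_inv, sub_eq_add_neg]

lemma add_smul_massTransfer_apply_of_ne (x : ι → ℝ) (t : ℝ) {k : ι} (hki : k ≠ i) (hkj : k ≠ j) :
    (x + t • massTransfer w i j) k = x k := by
  simp [massTransfer, hki, hkj]

end

variable [Fintype ι]

lemma StrictConvexOn.sum_apply {s : Set ℝ} {f : ℝ → ℝ} (hf : StrictConvexOn ℝ s f) :
    StrictConvexOn ℝ (univ.pi fun _ : ι => s) fun x => ∑ i, f (x i) := by
  refine ⟨convex_pi fun _ _ => hf.1, fun x hx y hy hxy a b ha hb hab => ?_⟩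
  obtain ⟨k, hk⟩ := Function.ne_iff.1 hxy
  simp only [smul_eq_mul, Finset.mul_sum, ← Finset.sum_add_distrib, Pi.add_apply, Pi.smul_apply]
  exact Finset.sum_lt_sum
    (fun i _ => hf.convexOn.2 (hx i trivial) (hy i trivial) ha.le hb.le hab)
    ⟨k, Finset.mem_univ k, hf.2 (hx k trivial) (hy k trivial) hk ha hb hab⟩

lemma Matrix.PosSemidef.convexOn_dotProduct_mulVec {M : Matrix ι ι ℝ} (hM : M.PosSemidef) :
    ConvexOn ℝ univ fun x : ι → ℝ => x ⬝ᵥ M *ᵥ x := by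
  refine ⟨convex_univ, fun x _ y _ a b ha hb hab => ?_⟩
  have hdiff : 0 ≤ (x - y) ⬝ᵥ M *ᵥ (x - y) := by simpa using hM.dotProduct_mulVec_nonneg (x - y)
  have key : a • (x ⬝ᵥ M *ᵥ x) + b • (y ⬝ᵥ M *ᵥ y) - (a • x + b • y) ⬝ᵥ M *ᵥ (a • x + b • y)
      = a * b * ((x - y) ⬝ᵥ M *ᵥ (x - y)) := by
    obtain rfl : b = 1 - a := by linarith
    simp only [mulVec_add, mulVec_sub, mulVec_smul, dotProduct_add, dotProduct_sub, add_dotProduct,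
      sub_dotProduct, dotProduct_smul, smul_dotProduct, smul_eq_mul]
    ring
  nlinarith [mul_nonneg (mul_nonneg ha hb) hdiff]

def massCube (w : ι → ℝ) (a₀ : ℝ) : Set (ι → ℝ) :=
  {x | (∀ i, x i ∈ Icc 0 1) ∧ w ⬝ᵥ x = a₀ * ∑ i, w i}

lemma massCube_eq (w : ι → ℝ) (a₀ : ℝ) :
    massCube w a₀ = univ.pi (fun _ => Icc 0 1) ∩ {x | w ⬝ᵥ x = a₀ * ∑ i, w i} := by
  ext x; simp only [massCube, mem_inter_iff, mem_univ_pi, mem_ofPred_eq]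

lemma isCompact_massCube (w : ι → ℝ) (a₀ : ℝ) : IsCompact (massCube w a₀) := by
  rw [massCube_eq]
  exact (isCompact_univ_pi fun _ => isCompact_Icc).inter_right
    (isClosed_eq (continuous_const.dotProduct continuous_id) continuous_const)

lemma convex_massCube (w : ι → ℝ) (a₀ : ℝ) : Convex ℝ (massCube w a₀) := by
  rw [massCube_eq]
  exact (convex_pi fun _ _ => convex_Icc 0 1).inter
    (convex_hyperplane ⟨dotProduct_add w, fun c x => dotProduct_smul c w x⟩ _)

lemma const_mem_massCube (w : ι → ℝ) {a₀ : ℝ} (ha₀ : a₀ ∈ Icc 0 1) :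
    (fun _ => a₀) ∈ massCube w a₀ :=
  ⟨fun _ => ha₀, by simp [dotProduct, Finset.mul_sum, mul_comm]⟩

lemma one_sub_mem_massCube {w : ι → ℝ} {a₀ : ℝ} {x : ι → ℝ} (hx : x ∈ massCube w a₀) :
    1 - x ∈ massCube w (1 - a₀) := by
  refine ⟨fun i => ?_, ?_⟩
  · have := hx.1 i
    simp only [Pi.sub_apply, Pi.one_apply, mem_Icc] at this ⊢
    constructor <;> linarith
  · rw [dotProduct_sub, dotProduct_one, hx.2]; ring

noncomputable def logEntropy (x : ι → ℝ) : ℝ := ∑ i, Fbar (x i)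

lemma logEntropy_one_sub (x : ι → ℝ) : logEntropy (1 - x) = logEntropy x := by
  simp only [logEntropy, Pi.sub_apply, Pi.one_apply, Fbar_one_sub]

@[fun_prop] lemma continuous_logEntropy : Continuous (logEntropy : (ι → ℝ) → ℝ) :=
  continuous_finsetSum _ fun i _ => continuous_Fbar.comp (continuous_apply i)

lemma strictConvexOn_logEntropy : StrictConvexOn ℝ (univ.pi fun _ : ι => Icc 0 1) logEntropy :=
  strictConvexOn_Fbar.sum_apply

lemma exists_pos_of_mem_massCube {w : ι → ℝ} (hw : ∀ i, 0 < w i) {a₀ : ℝ} (ha₀ : 0 < a₀)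
    [Nonempty ι] {x : ι → ℝ} (hx : x ∈ massCube w a₀) : ∃ j, 0 < x j := by
  by_contra! h
  have hmass : w ⬝ᵥ x ≤ 0 :=
    Finset.sum_nonpos fun k _ => mul_nonpos_of_nonneg_of_nonpos (hw k).le (h k)
  have hw_sum : 0 < ∑ i, w i := Finset.sum_pos (fun k _ => hw k) Finset.univ_nonempty
  rw [hx.2] at hmass
  nlinarith

section Transfer

variable [DecidableEq ι] {w : ι → ℝ} {i j : ι} {a₀ t : ℝ} {x : ι → ℝ}

lemma dotProduct_massTransfer (hwi : w i ≠ 0) (hwj : w j ≠ 0) : w ⬝ᵥ massTransfer w i j = 0 := by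
  simp [massTransfer, dotProduct_sub, dotProduct_single, hwi, hwj]

lemma add_smul_massTransfer_mem_massCube (hw : ∀ k, 0 < w k) (hij : i ≠ j)
    (hx : x ∈ massCube w a₀) (hxi : x i = 0) (ht0 : 0 ≤ t) (hti : t ≤ w i) (htj : t ≤ w j * x j) :
    x + t • massTransfer w i j ∈ massCube w a₀ := by
  refine ⟨fun k => ?_, ?_⟩
  · by_cases hki : k = i
    · subst hki
      rw [add_smul_massTransfer_apply_left hij, hxi, zero_add]
      exact ⟨div_nonneg ht0 (hw k).le, div_le_one_of_le₀ hti (hw k).le⟩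
    by_cases hkj : k = j
    · subst hkj
      rw [add_smul_massTransfer_apply_right hij]
      have : t / w k ≤ x k := by rwa [div_le_iff₀ (hw k), mul_comm]
      exact ⟨sub_nonneg.2 this, (sub_le_self _ (div_nonneg ht0 (hw k).le)).trans (hx.1 k).2⟩
    rw [add_smul_massTransfer_apply_of_ne x t hki hkj]
    exact hx.1 k
  · rw [dotProduct_add, dotProduct_smul, dotProduct_massTransfer (hw i).ne' (hw j).ne',
      smul_zero, add_zero, hx.2]

lemma logEntropy_add_smul_massTransfer_le (hw : ∀ k, 0 < w k) (hij : i ≠ j)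
    (hx : x ∈ massCube w a₀) (hxi : x i = 0) (hxj : 0 < x j)
    (ht0 : 0 ≤ t) (hti : t ≤ w i) (htj : t ≤ w j * x j) :
    logEntropy (x + t • massTransfer w i j)
      ≤ logEntropy x + t / w i * log (t / w i) + t / w j / x j * log 2 := by
  have hsplit : logEntropy (x + t • massTransfer w i j) - logEntropy x
      = (Fbar (t / w i) - Fbar (x i)) + (Fbar (x j - t / w j) - Fbar (x j)) := by
    rw [logEntropy, logEntropy, ← Finset.sum_sub_distrib, Finset.sum_eq_add_of_mem i j
      (Finset.mem_univ i) (Finset.mem_univ j) hij fun k _ hk => by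
        rw [add_smul_massTransfer_apply_of_ne x t hk.1 hk.2, sub_self],
      add_smul_massTransfer_apply_left hij, add_smul_massTransfer_apply_right hij, hxi, zero_add]
  have hy := add_smul_massTransfer_mem_massCube hw hij hx hxi ht0 hti htj
  have hleft : Fbar (t / w i) ≤ t / w i * log (t / w i) := by
    have := (hy.1 i); rw [add_smul_massTransfer_apply_left hij, hxi, zero_add] at this
    exact Fbar_le_mul_log this.1 this.2
  have hright : Fbar (x j - t / w j) ≤ Fbar (x j) + t / w j / x j * log 2 :=
    Fbar_sub_le hxj (hx.1 j).2 (div_nonneg ht0 (hw j).le)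
      (by rwa [div_le_iff₀ (hw j), mul_comm])
  rw [hxi, Fbar_zero] at hsplit
  linarith

end Transfer

section Interior

variable {P : (ι → ℝ) → ℝ} {w : ι → ℝ} {a₀ B : ℝ} {x : ι → ℝ}

lemma pos_of_isMinOn_add_logEntropy (hP : ConvexOn ℝ univ P) (hw : ∀ k, 0 < w k)
    (ha₀ : 0 < a₀) (hB : 0 < B) (hx : x ∈ massCube w a₀)
    (hmin : IsMinOn (fun y => P y + B * logEntropy y) (massCube w a₀) x) (i : ι) : 0 < x i := by
  classical
  by_contra! hxi
  replace hxi : x i = 0 := le_antisymm hxi (hx.1 i).1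
  have : Nonempty ι := ⟨i⟩
  obtain ⟨j, hxj⟩ := exists_pos_of_mem_massCube hw ha₀ hx
  have hij : i ≠ j := by rintro rfl; linarith
  set d := massTransfer w i j
  set K := P (x + d) - P x + B / w j / x j * log 2 - B / w i * log (w i)
  have hsmall : ∀ᶠ t in 𝓝[>] 0, t ∈ Ioc 0 (min 1 (min (w i) (w j * x j))) :=
    Ioc_mem_nhdsGT (lt_min one_pos (lt_min (hw i) (mul_pos (hw j) hxj)))
  have hslope : ∀ᶠ t in 𝓝[>] 0, K + B / w i * log t < 0 :=
    (tendsto_atBot_add_const_left _ K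
      (tendsto_log_nhdsGT_zero.const_mul_atBot (div_pos hB (hw i)))).eventually
      (eventually_lt_atBot 0)
  obtain ⟨t, ⟨ht0, ht⟩, hneg⟩ := (hsmall.and hslope).exists
  simp only [le_min_iff] at ht
  have hP_le := hP.le_add_smul_mul_sub x d ht0.le ht.1
  have hS_le := logEntropy_add_smul_massTransfer_le hw hij hx hxi hxj ht0.le ht.2.1 ht.2.2
  rw [log_div ht0.ne' (hw i).ne'] at hS_le
  have hdrop : P (x + t • d) + B * logEntropy (x + t • d) < P x + B * logEntropy x := by
    have hBS := mul_le_mul_of_nonneg_left hS_le hB.le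
    have hK : t * (K + B / w i * log t) < 0 := mul_neg_of_pos_of_neg ht0 hneg
    have hexpand : t * (K + B / w i * log t) = t * (P (x + d) - P x)
        + B * (t / w i * (log t - log (w i)) + t / w j / x j * log 2) := by
      simp only [K]; field_simp; ring
    nlinarith
  exact (hmin (add_smul_massTransfer_mem_massCube hw hij hx hxi ht0.le ht.2.1 ht.2.2)).not_gt hdrop

lemma lt_one_of_isMinOn_add_logEntropy (hP : ConvexOn ℝ univ P) (hw : ∀ k, 0 < w k)
    (ha₀ : a₀ < 1) (hB : 0 < B) (hx : x ∈ massCube w a₀)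
    (hmin : IsMinOn (fun y => P y + B * logEntropy y) (massCube w a₀) x) (i : ι) : x i < 1 := by
  have hP' : ConvexOn ℝ univ fun y => P (1 - y) := by
    have h := hP.comp_affineMap (AffineMap.const ℝ (ι → ℝ) 1 - AffineMap.id ℝ (ι → ℝ))
    rwa [preimage_univ] at h
  have hmin' : IsMinOn (fun y => P (1 - y) + B * logEntropy y) (massCube w (1 - a₀)) (1 - x) := by
    intro y hy
    have := hmin (by simpa using one_sub_mem_massCube hy)
    simpa [logEntropy_one_sub] using this
  have := pos_of_isMinOn_add_logEntropy hP' hw (sub_pos.2 ha₀) hB (one_sub_mem_massCube hx) hmin' i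
  simpa using this

end Interior

theorem stmt_8_general (n : ℕ) (w : Fin n → ℝ) (hw : ∀ i, 0 < w i)
    (a₀ : ℝ) (ha₀0 : 0 < a₀) (ha₀1 : a₀ < 1)
    (M : Matrix (Fin n) (Fin n) ℝ) (hM : M.PosSemidef)
    (b : Fin n → ℝ) (B : ℝ) (hB : 0 < B) :
    ∃ xstar : Fin n → ℝ,
      (xstar ∈ {x : Fin n → ℝ | (∀ i, 0 ≤ x i ∧ x i ≤ 1) ∧ ∑ i, w i * x i = a₀ * ∑ i, w i}
        ∧ (∀ y ∈ {x : Fin n → ℝ | (∀ i, 0 ≤ x i ∧ x i ≤ 1) ∧ ∑ i, w i * x i = a₀ * ∑ i, w i},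
            (1 / 2) * (xstar ⬝ᵥ M.mulVec xstar) + b ⬝ᵥ xstar + B * ∑ i, Fbar (xstar i)
              ≤ (1 / 2) * (y ⬝ᵥ M.mulVec y) + b ⬝ᵥ y + B * ∑ i, Fbar (y i)))
      ∧ (∀ i, 0 < xstar i ∧ xstar i < 1)
      ∧ (∀ x' ∈ {x : Fin n → ℝ | (∀ i, 0 ≤ x i ∧ x i ≤ 1) ∧ ∑ i, w i * x i = a₀ * ∑ i, w i},
          (∀ y ∈ {x : Fin n → ℝ | (∀ i, 0 ≤ x i ∧ x i ≤ 1) ∧ ∑ i, w i * x i = a₀ * ∑ i, w i},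
            (1 / 2) * (x' ⬝ᵥ M.mulVec x') + b ⬝ᵥ x' + B * ∑ i, Fbar (x' i)
              ≤ (1 / 2) * (y ⬝ᵥ M.mulVec y) + b ⬝ᵥ y + B * ∑ i, Fbar (y i))
          → x' = xstar) := by
  have hP : ConvexOn ℝ univ fun x : Fin n → ℝ => 1 / 2 * (x ⬝ᵥ M *ᵥ x) + b ⬝ᵥ x :=
    (hM.convexOn_dotProduct_mulVec.smul (by norm_num : (0 : ℝ) ≤ 1 / 2)).add
      ((dotProductBilin ℝ ℝ b).convexOn convex_univ)
  have hE : StrictConvexOn ℝ (massCube w a₀)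
      fun x => 1 / 2 * (x ⬝ᵥ M *ᵥ x) + b ⬝ᵥ x + B * logEntropy x :=
    (hP.subset (subset_univ _) (convex_massCube w a₀)).add_strictConvexOn
      ((strictConvexOn_logEntropy.const_mul hB).subset (fun x hx i _ => hx.1 i)
        (convex_massCube w a₀))
  have hcont : Continuous fun x => 1 / 2 * (x ⬝ᵥ M *ᵥ x) + b ⬝ᵥ x + B * logEntropy x :=
    by fun_prop
  obtain ⟨x, hx, hmin⟩ := (isCompact_massCube w a₀).exists_isMinOn
    ⟨_, const_mem_massCube w ⟨ha₀0.le, ha₀1.le⟩⟩ hcont.continuousOn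
  refine ⟨x, ⟨hx, fun y hy => hmin hy⟩, fun i => ⟨?_, ?_⟩,
    fun x' hx' hmin' => hE.eq_of_isMinOn (fun y hy => hmin' y hy) hmin hx' hx⟩
  · exact pos_of_isMinOn_add_logEntropy hP hw ha₀0 hB hx hmin i
  · exact lt_one_of_isMinOn_add_logEntropy hP hw ha₀1 hB hx hmin i

/-- the discrete energy
`G(x) = (1/2)·xᵀMx + bᵀx + B·Σᵢ F̄(xᵢ)` (with `M` symmetric positive semidefinite and
`B > 0`) attains its minimum over the compact convex set
`A = {x : 0 ≤ xᵢ ≤ 1, Σ wᵢ·xᵢ = a₀·Σ wᵢ}` at a unique point `x*`, which moreover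
satisfies `0 < x*ᵢ < 1` for every `i`. -/
theorem stmt_8 (n : ℕ) (hn : 1 ≤ n) (w : Fin n → ℝ) (hw : ∀ i, 0 < w i)
    (a₀ : ℝ) (ha₀0 : 0 < a₀) (ha₀1 : a₀ < 1)
    (M : Matrix (Fin n) (Fin n) ℝ) (hM : M.PosSemidef)
    (b : Fin n → ℝ) (B : ℝ) (hB : 0 < B) :
    ∃ xstar : Fin n → ℝ,
      (xstar ∈ {x : Fin n → ℝ | (∀ i, 0 ≤ x i ∧ x i ≤ 1) ∧ ∑ i, w i * x i = a₀ * ∑ i, w i}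
        ∧ (∀ y ∈ {x : Fin n → ℝ | (∀ i, 0 ≤ x i ∧ x i ≤ 1) ∧ ∑ i, w i * x i = a₀ * ∑ i, w i},
            (1 / 2) * (xstar ⬝ᵥ M.mulVec xstar) + b ⬝ᵥ xstar + B * ∑ i, Fbar (xstar i)
              ≤ (1 / 2) * (y ⬝ᵥ M.mulVec y) + b ⬝ᵥ y + B * ∑ i, Fbar (y i)))
      ∧ (∀ i, 0 < xstar i ∧ xstar i < 1)
      ∧ (∀ x' ∈ {x : Fin n → ℝ | (∀ i, 0 ≤ x i ∧ x i ≤ 1) ∧ ∑ i, w i * x i = a₀ * ∑ i, w i},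
          (∀ y ∈ {x : Fin n → ℝ | (∀ i, 0 ≤ x i ∧ x i ≤ 1) ∧ ∑ i, w i * x i = a₀ * ∑ i, w i},
            (1 / 2) * (x' ⬝ᵥ M.mulVec x') + b ⬝ᵥ x' + B * ∑ i, Fbar (x' i)
              ≤ (1 / 2) * (y ⬝ᵥ M.mulVec y) + b ⬝ᵥ y + B * ∑ i, Fbar (y i))
          → x' = xstar) :=
  stmt_8_general n w hw a₀ ha₀0 ha₀1 M hM b B hB
end

section
/- Let ι be a nonempty finite index set, let wᵢ > 0 with Σᵢ wᵢ = 1, let fᵢ be real numbers, and set ū = Σᵢ wᵢ·fᵢ, m = minᵢ fᵢ, M = maxᵢ fᵢ. Assume m < ū < M and 0 < ū < 1, and define θ = min{1, ū/(ū − m), (1 − ū)/(M − ū)}. Then for every i, 0 ≤ ū + θ·(fᵢ − ū) ≤ 1, and Σᵢ wᵢ·(ū + θ·(fᵢ − ū)) = ū. -/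
/-! Shrinking the nodal values towards `ū` by a factor `θ ∈ [0, 1]` is an affine map fixing `ū`,
so the weighted average is preserved because the weights sum to one. The node furthest below `ū`
is mapped to `ū - θ (ū - m) ≥ 0` and the one furthest above to `ū + θ (M - ū) ≤ 1`, which are
exactly the two constraints that the quotients in the definition of `θ` encode. -/

open Finset

theorem Finset.sum_mul_add_mul_sub {ι : Type*} {s : Finset ι} {w : ι → ℝ} (hw : ∑ i ∈ s, w i = 1)
    (f : ι → ℝ) (c θ : ℝ) :
    ∑ i ∈ s, w i * (c + θ * (f i - c)) = c + θ * (∑ i ∈ s, w i * f i - c) := by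
  have hsplit : ∀ i, w i * (c + θ * (f i - c)) = (1 - θ) * c * w i + θ * (w i * f i) :=
    fun i => by ring
  simp only [hsplit, sum_add_distrib, ← mul_sum, hw]
  ring

theorem le_add_mul_sub_of_le_div {a u m x θ : ℝ} (hm : m < u) (hx : m ≤ x) (hθ₀ : 0 ≤ θ)
    (hθ : θ ≤ (u - a) / (u - m)) : a ≤ u + θ * (x - u) := by
  have hθm : θ * (u - m) ≤ u - a := (le_div_iff₀ (sub_pos.2 hm)).1 hθ
  have hxm : θ * (m - u) ≤ θ * (x - u) := mul_le_mul_of_nonneg_left (by linarith) hθ₀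
  linarith

theorem add_mul_sub_le_of_le_div {b u M x θ : ℝ} (hM : u < M) (hx : x ≤ M) (hθ₀ : 0 ≤ θ)
    (hθ : θ ≤ (b - u) / (M - u)) : u + θ * (x - u) ≤ b := by
  have hθM : θ * (M - u) ≤ b - u := (le_div_iff₀ (sub_pos.2 hM)).1 hθ
  have hxM : θ * (x - u) ≤ θ * (M - u) := mul_le_mul_of_nonneg_left (by linarith) hθ₀
  linarith

theorem stmt_9_general {ι : Type*} [Fintype ι] [Nonempty ι]
    (w f : ι → ℝ) (hwsum : ∑ i, w i = 1)
    (ubar m M θ : ℝ)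
    (hubar : ubar = ∑ i, w i * f i)
    (hm : m = Finset.univ.inf' Finset.univ_nonempty f)
    (hM : M = Finset.univ.sup' Finset.univ_nonempty f)
    (hmu : m < ubar) (huM : ubar < M) (hu0 : 0 < ubar) (hu1 : ubar < 1)
    (hθ : θ = min 1 (min (ubar / (ubar - m)) ((1 - ubar) / (M - ubar)))) :
    (∀ i, 0 ≤ ubar + θ * (f i - ubar) ∧ ubar + θ * (f i - ubar) ≤ 1)
      ∧ ∑ i, w i * (ubar + θ * (f i - ubar)) = ubar := by
  have hθ₀ : 0 ≤ θ := hθ ▸ le_min zero_le_one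
    (le_min (div_nonneg hu0.le (sub_pos.2 hmu).le) (div_nonneg (sub_pos.2 hu1).le (sub_pos.2 huM).le))
  have hθm : θ ≤ (ubar - 0) / (ubar - m) := by
    rw [sub_zero, hθ]
    exact (min_le_right _ _).trans (min_le_left _ _)
  have hθM : θ ≤ (1 - ubar) / (M - ubar) := by
    rw [hθ]
    exact (min_le_right _ _).trans (min_le_right _ _)
  refine ⟨fun i => ⟨?_, ?_⟩, ?_⟩
  · exact le_add_mul_sub_of_le_div hmu (hm ▸ inf'_le f (mem_univ i)) hθ₀ hθm
  · exact add_mul_sub_le_of_le_div huM (hM ▸ le_sup' f (mem_univ i)) hθ₀ hθM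
  · rw [sum_mul_add_mul_sub hwsum, ← hubar, sub_self, mul_zero, add_zero]

/-- the Zhang–Shu positivity-preserving limiter for the cell density.
With nodal values `fᵢ`, quadrature weights `wᵢ > 0` summing to 1, cell average
`ū = Σ wᵢ fᵢ`, `m = min fᵢ`, `M = max fᵢ`, `m < ū < M`, `0 < ū < 1` and
`θ = min{1, ū/(ū−m), (1−ū)/(M−ū)}`, the limited nodal values `ū + θ(fᵢ − ū)` lie in
`[0, 1]` and have the same weighted average `ū`. -/
theorem stmt_9 {ι : Type*} [Fintype ι] [Nonempty ι]
    (w f : ι → ℝ) (hw : ∀ i, 0 < w i) (hwsum : ∑ i, w i = 1)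
    (ubar m M θ : ℝ)
    (hubar : ubar = ∑ i, w i * f i)
    (hm : m = Finset.univ.inf' Finset.univ_nonempty f)
    (hM : M = Finset.univ.sup' Finset.univ_nonempty f)
    (hmu : m < ubar) (huM : ubar < M) (hu0 : 0 < ubar) (hu1 : ubar < 1)
    (hθ : θ = min 1 (min (ubar / (ubar - m)) ((1 - ubar) / (M - ubar)))) :
    (∀ i, 0 ≤ ubar + θ * (f i - ubar) ∧ ubar + θ * (f i - ubar) ≤ 1)
      ∧ ∑ i, w i * (ubar + θ * (f i - ubar)) = ubar :=
  stmt_9_general w f hwsum ubar m M θ hubar hm hM hmu huM hu0 hu1 hθ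
end
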